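/- The monomials x(τ_i), 1 ≤ i ≤ m, span ℛ as a left S-module: every element of ℛ is a left S-linear combination of x(τ_1), …, x(τ_m). -/

import Mathlib

open scoped Classical

noncomputable section

namespace SU

/-- The closed real cone spanned by the vectors `v j`, `j ∈ F`. -/
def realCone {n d : ℕ} (v : Fin d → Fin n → ℤ) (F : Finset (Fin d)) : Set (Fin n → ℝ) :=
  {x | ∃ c : Fin d → ℝ, (∀ j, 0 ≤ c j) ∧ (∀ j, j ∉ F → c j = 0) ∧
    x = ∑ j, c j • fun i => (v j i : ℝ)}

/-- A complete nonsingular fan in `N = ℤ^n`, recorded combinatorially.  Since the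
cones of a nonsingular fan are simplicial, every cone is determined by the set of
its edges; `isCone F` says that the primitive vectors `v j`, `j ∈ F`, span a cone
of the fan `Δ`.  Faces correspond to subsets, and the dimension of a cone is the
cardinality of its edge set. -/
structure Fan (n d : ℕ) where
  /-- the primitive generators of the `d` edges (1-dimensional cones) of the fan -/
  v : Fin d → Fin n → ℤ
  v_inj : Function.Injective v
  /-- `isCone F` : the `v j`, `j ∈ F`, span a cone of the fan -/
  isCone : Finset (Fin d) → Prop
  isCone_empty : isCone ∅
  isCone_singleton : ∀ j, isCone {j}
  /-- the fan is closed under taking faces -/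
  isCone_mono : ∀ {F G}, isCone F → G ⊆ F → isCone G
  /-- any two cones meet along a common face -/
  isCone_inter : ∀ {F G}, isCone F → isCone G → isCone (F ∩ G)
  realCone_inter : ∀ {F G}, isCone F → isCone G →
    realCone v F ∩ realCone v G = realCone v (F ∩ G)
  /-- the fan is complete : the union of its cones is all of `N ⊗ ℝ` -/
  complete : ∀ x : Fin n → ℝ, ∃ F, isCone F ∧ x ∈ realCone v F
  /-- nonsingularity : the generators of each cone form part of a `ℤ`-basis of `N` -/
  unimodular : ∀ {F}, isCone F → ∃ (b : Module.Basis (Fin n) ℤ (Fin n → ℤ))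
    (ι : Fin d → Fin n), Set.InjOn ι ↑F ∧ ∀ j ∈ F, b (ι j) = v j

/-- An enumeration `σ 0, …, σ (m-1)` of the `n`-dimensional cones of the fan. -/
structure MaxOrder {n d : ℕ} (Δ : Fan n d) (m : ℕ) where
  σ : Fin m → Finset (Fin d)
  isCone_σ : ∀ i, Δ.isCone (σ i)
  card_σ : ∀ i, (σ i).card = n
  σ_inj : Function.Injective σ
  σ_surj : ∀ F, Δ.isCone F → F.card = n → ∃ i, σ i = F

/-- `τ i` : the intersection of `σ i` with those cones `σ k`, `k > i`, with
`dim (σ i ∩ σ k) = n - 1`. -/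
def MaxOrder.tau {n d m : ℕ} {Δ : Fan n d} (o : MaxOrder Δ m) (i : Fin m) :
    Finset (Fin d) :=
  (o.σ i).filter fun j => ∀ k, i < k → ((o.σ i) ∩ (o.σ k)).card = n - 1 → j ∈ o.σ k

/-- Property (*) : `τ i` a face of `σ j` implies `i ≤ j`. -/
def MaxOrder.Star {n d m : ℕ} {Δ : Fan n d} (o : MaxOrder Δ m) : Prop :=
  ∀ i j, o.tau i ⊆ o.σ j → i ≤ j

/-- the set `{1, …, n} ⊆ {1, …, d}` of the first `n` edges -/
def firstn {n d : ℕ} (hnd : n ≤ d) : Finset (Fin d) :=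
  Finset.univ.map ⟨Fin.castLE hnd, Fin.castLE_injective hnd⟩

variable {n d : ℕ} (S : Type*) [Ring S]

/-- The polynomial algebra over a (possibly noncommutative) ring `S` in `d`
central, pairwise commuting, variables. -/
abbrev Poly (S : Type*) [Ring S] (d : ℕ) : Type _ := AddMonoidAlgebra S (Fin d →₀ ℕ)

/-- the variable `x j` -/
def X (j : Fin d) : Poly S d := AddMonoidAlgebra.single (Finsupp.single j 1) 1

/-- the scalar `s ∈ S` as a polynomial -/
def Cc (s : S) : Poly S d := AddMonoidAlgebra.single 0 s

/-- The square-free monomial `∏_{j ∈ F} x j`. -/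
def mon (F : Finset (Fin d)) : Poly S d :=
  AddMonoidAlgebra.single (∑ j ∈ F, Finsupp.single j 1) 1

lemma commute_X (j k : Fin d) : Commute (X S j) (X S k) := by
  show X S j * X S k = X S k * X S j
  simp only [X]
  rw [AddMonoidAlgebra.single_mul_single, AddMonoidAlgebra.single_mul_single, add_comm]

lemma commute_one_sub_X_pow (j k : Fin d) (a b : ℕ) :
    Commute ((1 - X S j) ^ a) ((1 - X S k) ^ b) :=
  ((Commute.one_left (1 - X S k)).sub_left
    ((Commute.one_right (X S j)).sub_right (commute_X S j k))).pow_pow a b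

/-- the relation (on the polynomial ring) identifying every member of `gens`
with `0`; the corresponding `RingQuot` is the quotient by the two-sided ideal
generated by `gens`. -/
def relOf (gens : Set (Poly S d)) : Poly S d → Poly S d → Prop :=
  fun p q => p ∈ gens ∧ q = 0

/-- type (i) generators : the monomials `x_{j₁} ⋯ x_{j_k}` (distinct indices)
such that `v_{j₁}, …, v_{j_k}` do not span a cone of `Δ`. -/
def gensCone (Δ : Fan n d) : Set (Poly S d) :=
  {p | ∃ F : Finset (Fin d), ¬ Δ.isCone F ∧ p = mon S F}

/-- type (ii) generators : the elements `y i = ∑_j ⟨u i, v j⟩ x j - r i`. -/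
def gensLin (Δ : Fan n d) (uu : Fin n → ((Fin n → ℤ) →ₗ[ℤ] ℤ)) (r : Fin n → S) :
    Set (Poly S d) :=
  {p | ∃ i : Fin n, p = (∑ j, (uu i (Δ.v j)) • X S j) - Cc S (r i)}

/-- the generators of the ideal `I_S` -/
def gensI (Δ : Fan n d) (uu : Fin n → ((Fin n → ℤ) →ₗ[ℤ] ℤ)) (r : Fin n → S) :
    Set (Poly S d) :=
  gensCone S Δ ∪ gensLin S Δ uu r

/-- the ring `R = S[x₁,…,x_d]/I_S` -/
abbrev RRing (Δ : Fan n d) (uu : Fin n → ((Fin n → ℤ) →ₗ[ℤ] ℤ)) (r : Fin n → S) :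
    Type _ :=
  RingQuot (relOf S (gensI S Δ uu r))

/-- the quotient map `S[x₁,…,x_d] → R` -/
def mkR (Δ : Fan n d) (uu : Fin n → ((Fin n → ℤ) →ₗ[ℤ] ℤ)) (r : Fin n → S) :
    Poly S d →+* RRing S Δ uu r :=
  RingQuot.mkRingHom _

/-- `∏_{j : ⟨u, v j⟩ > 0} (1 - x j) ^ ⟨u, v j⟩` -/
def zPos (Δ : Fan n d) (u : (Fin n → ℤ) →ₗ[ℤ] ℤ) : Poly S d :=
  Finset.univ.noncommProd (fun j => (1 - X S j) ^ (u (Δ.v j)).toNat)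
    (fun j _ k _ _ => commute_one_sub_X_pow S j k _ _)

/-- `∏_{j : ⟨u, v j⟩ < 0} (1 - x j) ^ (-⟨u, v j⟩)` -/
def zNeg (Δ : Fan n d) (u : (Fin n → ℤ) →ₗ[ℤ] ℤ) : Poly S d :=
  Finset.univ.noncommProd (fun j => (1 - X S j) ^ (-(u (Δ.v j))).toNat)
    (fun j _ k _ _ => commute_one_sub_X_pow S j k _ _)

lemma central_commute (ru : Fin n → Sˣ)
    (hcen : ∀ i, (ru i : S) ∈ Subring.center S) (i k : Fin n) :
    Commute (ru i) (ru k) := by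
  show ru i * ru k = ru k * ru i
  exact Units.ext (by simpa using (Subring.mem_center_iff.mp (hcen i) (ru k)).symm)

/-- `r(u) = ∏_i r i ^ a i` for `u = ∑ a i • u i`, the `r i` being invertible. -/
def rOf (ru : Fin n → Sˣ) (hc : ∀ i k, Commute (ru i) (ru k)) (a : Fin n → ℤ) : S :=
  (Finset.univ.noncommProd (fun i => ru i ^ a i)
    (fun i _ k _ _ => (hc i k).zpow_zpow _ _) : Sˣ)

/-- type (ii′) generators : the elements `z(u)` for `u ∈ M` -/
def gensZ (Δ : Fan n d) (uu : Fin n → ((Fin n → ℤ) →ₗ[ℤ] ℤ)) (ru : Fin n → Sˣ)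
    (hc : ∀ i k, Commute (ru i) (ru k)) : Set (Poly S d) :=
  {p | ∃ a : Fin n → ℤ, p = zPos S Δ (∑ i, a i • uu i) -
    Cc S (rOf S ru hc a) * zNeg S Δ (∑ i, a i • uu i)}

/-- the generators of the ideal `𝓘_S` -/
def gensII (Δ : Fan n d) (uu : Fin n → ((Fin n → ℤ) →ₗ[ℤ] ℤ)) (ru : Fin n → Sˣ)
    (hc : ∀ i k, Commute (ru i) (ru k)) : Set (Poly S d) :=
  gensCone S Δ ∪ gensZ S Δ uu ru hc

/-- the ring `ℛ = S[x₁,…,x_d]/𝓘_S` -/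
abbrev RcalRing (Δ : Fan n d) (uu : Fin n → ((Fin n → ℤ) →ₗ[ℤ] ℤ)) (ru : Fin n → Sˣ)
    (hc : ∀ i k, Commute (ru i) (ru k)) : Type _ :=
  RingQuot (relOf S (gensII S Δ uu ru hc))

/-- the quotient map `S[x₁,…,x_d] → ℛ` -/
def mkRcal (Δ : Fan n d) (uu : Fin n → ((Fin n → ℤ) →ₗ[ℤ] ℤ)) (ru : Fin n → Sˣ)
    (hc : ∀ i k, Commute (ru i) (ru k)) : Poly S d →+* RcalRing S Δ uu ru hc :=
  RingQuot.mkRingHom _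

/-! ### Auxiliary algebra lemmas -/

section AuxAlg

variable {S}

lemma single_central (a : Fin d →₀ ℕ) (q : Poly S d) :
    Commute (AddMonoidAlgebra.single a (1 : S)) q := by
  induction q using AddMonoidAlgebra.induction with
  | zero => exact Commute.zero_right _
  | single_add b s f _ _ ih =>
    exact (AddMonoidAlgebra.single_commute_single (add_comm a b) (Commute.one_left s)).add_right ih

lemma Cc_mul_single (s t : S) (a : Fin d →₀ ℕ) :
    Cc S s * AddMonoidAlgebra.single a t = AddMonoidAlgebra.single a (s * t) := by
  rw [Cc, AddMonoidAlgebra.single_mul_single, zero_add]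

lemma poly_eq_sum_support (q : Poly S d) :
    q = ∑ b ∈ q.coeff.support, Cc S (q.coeff b) * AddMonoidAlgebra.single b 1 := by
  simp_rw [Cc_mul_single, mul_one]
  conv_lhs => rw [← AddMonoidAlgebra.sum_coeff_single q]
  rfl

lemma indic_apply (F : Finset (Fin d)) (t : Fin d) :
    (∑ j ∈ F, Finsupp.single j (1 : ℕ)) t = if t ∈ F then 1 else 0 := by
  rw [Finset.sum_apply']
  simp [Finsupp.single_apply]

lemma single_eq_mon_mul (b : Fin d →₀ ℕ) :
    (AddMonoidAlgebra.single b 1 : Poly S d) =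
      mon S b.support *
        AddMonoidAlgebra.single (b - ∑ j ∈ b.support, Finsupp.single j 1) 1 := by
  rw [mon, AddMonoidAlgebra.single_mul_single, one_mul]
  congr 1
  ext t
  rw [Finsupp.add_apply, Finsupp.tsub_apply, indic_apply]
  by_cases h : t ∈ b.support
  · have hb : b t ≠ 0 := Finsupp.mem_support_iff.mp h
    simp only [h, if_true]
    omega
  · have hb : b t = 0 := Finsupp.notMem_support_iff.mp h
    simp [h, hb]

lemma one_sub_X_pow_decomp (l : Fin d) (e : ℕ) :
    ∃ g : Poly S d, (1 - X S l) ^ e = 1 + X S l * g ∧ (e = 0 → g = 0) := by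
  induction e with
  | zero => exact ⟨0, by simp, fun _ => rfl⟩
  | succ e ih =>
    obtain ⟨g, hg, -⟩ := ih
    refine ⟨g - 1 - g * X S l, ?_, fun h => absurd h (Nat.succ_ne_zero e)⟩
    rw [pow_succ, hg]
    noncomm_ring

lemma noncommProd_one_add_decomp (g : Fin d → Poly S d)
    (hcomm : ∀ j k : Fin d, Commute (1 + X S j * g j) (1 + X S k * g k)) (s : Finset (Fin d)) :
    ∃ h : Fin d → Poly S d,
      s.noncommProd (fun l => 1 + X S l * g l) (fun j _ k _ _ => hcomm j k) =
        1 + ∑ l ∈ s, X S l * h l ∧ ∀ l, g l = 0 → h l = 0 := by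
  classical
  induction s using Finset.induction with
  | empty => exact ⟨fun _ => 0, by erw [Finset.noncommProd_empty]; simp, fun _ _ => rfl⟩
  | @insert a s hna ih =>
    obtain ⟨h, hh, hz⟩ := ih
    erw [Finset.noncommProd_insert_of_notMem _ _ _ _ hna]
    refine ⟨fun l => if l = a then g a * (1 + ∑ l ∈ s, X S l * h l) else h l, ?_, ?_⟩
    · rw [hh, Finset.sum_insert hna]
      dsimp only
      rw [if_pos rfl]
      rw [Finset.sum_congr rfl
        (fun l hl => by rw [if_neg (ne_of_mem_of_not_mem hl hna)] : ∀ l ∈ s,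
          X S l * (if l = a then g a * (1 + ∑ l ∈ s, X S l * h l) else h l) = X S l * h l)]
      set T := ∑ l ∈ s, X S l * h l
      noncomm_ring
    · intro l hl
      by_cases hla : l = a
      · subst hla; dsimp only; rw [if_pos rfl, hl, zero_mul]
      · dsimp only; rw [if_neg hla]; exact hz l hl

lemma noncommProd_univ_erase (f : Fin d → Poly S d)
    (hc : ∀ j k : Fin d, Commute (f j) (f k)) (j : Fin d) :
    Finset.univ.noncommProd f (fun x _ y _ _ => hc x y) =
      f j * (Finset.univ.erase j).noncommProd f (fun x _ y _ _ => hc x y) := by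
  classical
  rw [Finset.noncommProd_congr (Finset.insert_erase (Finset.mem_univ j)).symm
    (fun x _ => rfl) (fun x _ y _ _ => hc x y)]
  erw [Finset.noncommProd_insert_of_notMem _ _ _ _ (Finset.notMem_erase j _)]

end AuxAlg

/-! ### Geometry of the fan -/

section Geometry

/-- the real vectors generating the cones -/
def vR (Δ : Fan n d) (j : Fin d) : Fin n → ℝ := fun i => (Δ.v j i : ℝ)

variable {Δ : Fan n d}

lemma realCone_mono {F G : Finset (Fin d)} (h : F ⊆ G) :
    realCone Δ.v F ⊆ realCone Δ.v G := by
  rintro x ⟨c, h0, hsupp, rfl⟩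
  exact ⟨c, h0, fun j hj => hsupp j (fun hm => hj (h hm)), rfl⟩

lemma sum_mem_realCone (F : Finset (Fin d)) :
    (∑ j ∈ F, vR Δ j) ∈ realCone Δ.v F := by
  refine ⟨fun j => if j ∈ F then 1 else 0, fun j => by dsimp only; split <;> norm_num,
    fun j hj => if_neg hj, ?_⟩
  show ∑ j ∈ F, vR Δ j = ∑ j : Fin d, (if j ∈ F then (1:ℝ) else 0) • vR Δ j
  have h : ∀ j : Fin d, (if j ∈ F then (1:ℝ) else 0) • vR Δ j
      = if j ∈ F then vR Δ j else 0 := fun j => by split <;> simp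
  rw [Finset.sum_congr rfl (fun j _ => h j), Finset.sum_ite_mem, Finset.univ_inter]

lemma exists_dual_real {F : Finset (Fin d)} (hF : Δ.isCone F) {j0 : Fin d} (hj0 : j0 ∈ F) :
    ∃ φ : (Fin n → ℝ) →ₗ[ℝ] ℝ, ∀ l ∈ F, φ (vR Δ l) = if l = j0 then 1 else 0 := by
  obtain ⟨b, ι, hinj, hb⟩ := Δ.unimodular hF
  set u : (Fin n → ℤ) →ₗ[ℤ] ℤ := b.coord (ι j0) with hu
  refine ⟨{ toFun := fun x => ∑ i, (u (Pi.single i 1) : ℝ) * x i,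
            map_add' := fun x y => by
              simp only [Pi.add_apply, mul_add]
              rw [Finset.sum_add_distrib],
            map_smul' := fun r x => by
              simp only [Pi.smul_apply, smul_eq_mul, RingHom.id_apply, Finset.mul_sum]
              exact Finset.sum_congr rfl fun i _ => by ring }, ?_⟩
  intro l hl
  have h1 : ∀ zv : Fin n → ℤ, ∑ i, (u (Pi.single i 1) : ℝ) * ((zv i : ℤ) : ℝ)
      = ((u zv : ℤ) : ℝ) := by
    intro zv
    have hzv : zv = ∑ i, zv i • Pi.single i (1:ℤ) := by
      ext t
      simp [Pi.single_apply, Finset.sum_ite_eq]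
    conv_rhs => rw [hzv]
    rw [map_sum]
    push_cast
    refine Finset.sum_congr rfl fun i _ => ?_
    rw [map_zsmul, smul_eq_mul]
    push_cast
    ring
  show ∑ i, (u (Pi.single i 1) : ℝ) * ((Δ.v l i : ℤ) : ℝ) = _
  rw [h1 (Δ.v l), ← hb l hl, hu, Module.Basis.coord_apply, Module.Basis.repr_self,
    Finsupp.single_apply]
  by_cases h : l = j0
  · subst h; simp
  · rw [if_neg (fun hh => h (hinj hl hj0 hh)), if_neg h, Int.cast_zero]

lemma exists_dual_family {F : Finset (Fin d)} (hF : Δ.isCone F) :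
    ∃ φ : Fin d → ((Fin n → ℝ) →ₗ[ℝ] ℝ),
      ∀ j0 ∈ F, ∀ l ∈ F, φ j0 (vR Δ l) = if l = j0 then 1 else 0 := by
  refine ⟨fun j0 => if h : j0 ∈ F then (exists_dual_real hF h).choose else 0,
    fun j0 hj0 l hl => ?_⟩
  dsimp only
  rw [dif_pos hj0]
  exact (exists_dual_real hF hj0).choose_spec l hl

lemma realCone_coeff {F : Finset (Fin d)} {φl : (Fin n → ℝ) →ₗ[ℝ] ℝ} {l : Fin d}
    (hφ : ∀ j ∈ F, φl (vR Δ j) = if j = l then 1 else 0) (hlF : l ∈ F)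
    {c : Fin d → ℝ} (hc0 : ∀ j, j ∉ F → c j = 0) :
    φl (∑ j, c j • vR Δ j) = c l := by
  rw [map_sum]
  simp_rw [map_smul]
  rw [Finset.sum_eq_single l]
  · rw [hφ l hlF, if_pos rfl, smul_eq_mul, mul_one]
  · intro j _ hj
    by_cases hjF : j ∈ F
    · rw [hφ j hjF, if_neg hj, smul_eq_mul, mul_zero]
    · rw [hc0 j hjF, zero_smul]
  · exact fun h => absurd (Finset.mem_univ l) h

lemma realCone_repr_eq {F : Finset (Fin d)} (hF : Δ.isCone F)
    {φ : Fin d → ((Fin n → ℝ) →ₗ[ℝ] ℝ)}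
    (hφ : ∀ j0 ∈ F, ∀ l ∈ F, φ j0 (vR Δ l) = if l = j0 then 1 else 0)
    {x : Fin n → ℝ} (hx : x ∈ realCone Δ.v F) :
    x = ∑ j ∈ F, (φ j x) • vR Δ j := by
  obtain ⟨c, hcn, hcs, hce⟩ := hx
  have hce' : x = ∑ j : Fin d, c j • vR Δ j := hce
  have hc : ∀ j ∈ F, c j = φ j x := by
    intro j hj
    rw [hce']
    exact (realCone_coeff (fun l hl => hφ j hj l hl) hj hcs).symm
  conv_lhs => rw [hce']
  rw [← Finset.sum_subset (Finset.subset_univ F)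
    (fun j _ hj => by rw [hcs j hj, zero_smul])]
  exact Finset.sum_congr rfl fun j hj => by rw [hc j hj]

lemma mem_realCone_of_freq {F : Finset (Fin d)} (hF : Δ.isCone F) (x w : Fin n → ℝ)
    (hfreq : ∀ K : ℕ, ∃ k, K ≤ k ∧ x + (1 / ((k : ℝ) + 1)) • w ∈ realCone Δ.v F) :
    x ∈ realCone Δ.v F := by
  obtain ⟨φ, hφ⟩ := exists_dual_family hF
  obtain ⟨k1, -, h1⟩ := hfreq 0
  obtain ⟨k2, hk2, h2⟩ := hfreq (k1 + 1)
  set t1 : ℝ := 1 / ((k1 : ℝ) + 1) with ht1def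
  set t2 : ℝ := 1 / ((k2 : ℝ) + 1) with ht2def
  have ht1 : 0 < t1 := by positivity
  have ht2 : 0 < t2 := by positivity
  have htne : t1 ≠ t2 := by
    have : (k1 : ℝ) < (k2 : ℝ) := by exact_mod_cast by omega
    have : t2 < t1 := by
      rw [ht1def, ht2def]
      apply one_div_lt_one_div_of_lt <;> linarith
    exact (ne_of_gt this)
  have E : ∀ t : ℝ, x + t • w ∈ realCone Δ.v F →
      x + t • w = (∑ j ∈ F, (φ j x) • vR Δ j) + t • (∑ j ∈ F, (φ j w) • vR Δ j) := by
    intro t hmem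
    have := realCone_repr_eq hF hφ hmem
    rw [this]
    rw [Finset.smul_sum, ← Finset.sum_add_distrib]
    refine Finset.sum_congr rfl fun j hj => ?_
    rw [map_add, map_smul, add_smul, smul_eq_mul, mul_smul]
  have E1 := E t1 h1
  have E2 := E t2 h2
  set A := ∑ j ∈ F, (φ j x) • vR Δ j
  set B := ∑ j ∈ F, (φ j w) • vR Δ j
  have hwB : w = B := by
    have h3 : (t1 - t2) • w = (t1 - t2) • B := by
      have := congrArg₂ (· - ·) E1 E2
      simp only [add_sub_add_left_eq_sub, ← sub_smul] at this
      exact this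
    exact smul_right_injective _ (sub_ne_zero.mpr htne) h3
  have hxA : x = A := by
    have := E1
    rw [hwB] at this
    exact add_right_cancel this
  -- now show membership with coefficients φ j x
  refine ⟨fun j => if j ∈ F then φ j x else 0, ?_, fun j hj => if_neg hj, ?_⟩
  · intro j
    dsimp only
    split
    case isTrue hjF =>
      by_contra hneg
      push_neg at hneg
      set ε : ℝ := -(φ j x) with hε
      have hε0 : 0 < ε := by simp [hε]; linarith
      obtain ⟨K, hK⟩ := exists_nat_gt (|φ j w| / ε)
      obtain ⟨k, hk, hmem⟩ := hfreq K
      set t : ℝ := 1 / ((k : ℝ) + 1) with htdef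
      have ht : 0 < t := by positivity
      have hcj : φ j (x + t • w) = (if j ∈ F then φ j (x + t • w) else 0) := by
        rw [if_pos hjF]
      -- the coefficient is nonneg
      obtain ⟨c, hcn, hcs, hce⟩ := hmem
      have hce' : x + t • w = ∑ l : Fin d, c l • vR Δ l := hce
      have hcoef : φ j (x + t • w) = c j := by
        rw [hce']
        exact realCone_coeff (fun l hl => hφ j hjF l hl) hjF hcs
      have hge : 0 ≤ φ j (x + t • w) := hcoef ▸ hcn j
      -- but it is negative
      have hbound : φ j (x + t • w) < 0 := by
        rw [map_add, map_smul, smul_eq_mul]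
        have h5 : t * φ j w ≤ t * |φ j w| := by
          apply mul_le_mul_of_nonneg_left (le_abs_self _) ht.le
        have h6 : t * |φ j w| < ε := by
          have hkK : t ≤ 1 / ((K : ℝ) + 1) := by
            rw [htdef]
            apply one_div_le_one_div_of_le
            · positivity
            · have : (K : ℝ) ≤ (k : ℝ) := by exact_mod_cast hk
              linarith
          have habs : |φ j w| < ε * ((K : ℝ) + 1) := by
            have h7 : |φ j w| / ε < (K : ℝ) := hK
            calc |φ j w| = (|φ j w| / ε) * ε := by field_simp
            _ < (K : ℝ) * ε := by
                apply mul_lt_mul_of_pos_right h7 hε0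
            _ ≤ ε * ((K : ℝ) + 1) := by nlinarith
          calc t * |φ j w| ≤ (1 / ((K : ℝ) + 1)) * |φ j w| := by
                apply mul_le_mul_of_nonneg_right hkK (abs_nonneg _)
          _ < ε := by
              rw [div_mul_eq_mul_div, one_mul, div_lt_iff₀ (by positivity)]
              linarith [habs]
        have : φ j x = -ε := by rw [hε]; ring
        linarith
      linarith
    case isFalse => exact le_refl 0
  · show x = ∑ j : Fin d, (if j ∈ F then φ j x else 0) • vR Δ j
    have h : ∀ j : Fin d, (if j ∈ F then φ j x else 0) • vR Δ j
        = if j ∈ F then (φ j x) • vR Δ j else 0 := fun j => by split <;> simp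
    rw [Finset.sum_congr rfl (fun j _ => h j), Finset.sum_ite_mem, Finset.univ_inter]
    exact hxA

lemma nat_infinite_unbounded {s : Set ℕ} (hs : s.Infinite) (K : ℕ) :
    ∃ k ∈ s, K ≤ k := by
  by_contra h
  push_neg at h
  exact hs (Set.Finite.subset (Set.finite_Iio K) (fun k hk => h k hk))

lemma exists_cone_perturb {F : Finset (Fin d)} (hF : Δ.isCone F) (w : Fin n → ℝ) :
    ∃ (G : Finset (Fin d)) (t : ℝ), Δ.isCone G ∧ F ⊆ G ∧ 0 < t ∧
      (∑ j ∈ F, vR Δ j) + t • w ∈ realCone Δ.v G := by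
  classical
  set xh := ∑ j ∈ F, vR Δ j with hxh
  choose Gk hc1 hc2 using fun k : ℕ => Δ.complete (xh + (1 / ((k : ℝ) + 1)) • w)
  obtain ⟨G, hGinf⟩ := Finite.exists_infinite_fiber Gk
  have hfib : ∀ K : ℕ, ∃ k, K ≤ k ∧ Gk k = G := by
    intro K
    obtain ⟨k, hk1, hk2⟩ := nat_infinite_unbounded (Set.infinite_coe_iff.mp hGinf) K
    exact ⟨k, hk2, hk1⟩
  obtain ⟨k0, -, hk0⟩ := hfib 0
  have hGcone : Δ.isCone G := hk0 ▸ hc1 k0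
  have hmem : xh ∈ realCone Δ.v G := by
    refine mem_realCone_of_freq hGcone xh w (fun K => ?_)
    obtain ⟨k, hKk, hGk⟩ := hfib K
    exact ⟨k, hKk, hGk ▸ hc2 k⟩
  have hsub : F ⊆ G := by
    have hx2 : xh ∈ realCone Δ.v (F ∩ G) := by
      rw [← Δ.realCone_inter hF hGcone]
      exact ⟨sum_mem_realCone F, hmem⟩
    obtain ⟨c, -, hcs, hce⟩ := hx2
    intro l hlF
    obtain ⟨φ, hφ⟩ := exists_dual_real hF hlF
    have hce' : xh = ∑ j : Fin d, c j • vR Δ j := hce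
    have hcl : φ (∑ j : Fin d, c j • vR Δ j) = c l :=
      realCone_coeff hφ hlF
        (fun j hj => hcs j (fun hmem' => hj (Finset.mem_of_mem_inter_left hmem')))
    have hx1 : φ xh = 1 := by
      rw [hxh, map_sum]
      rw [Finset.sum_congr rfl (fun j hj => hφ j hj)]
      rw [Finset.sum_ite_eq' F l (fun _ => (1:ℝ)), if_pos hlF]
    by_contra hlG
    have : c l = 0 := hcs l (fun hmem' => hlG (Finset.mem_of_mem_inter_right hmem'))
    rw [← hce', hx1] at hcl
    rw [this] at hcl
    norm_num at hcl
  exact ⟨G, 1 / ((k0 : ℝ) + 1), hGcone, hsub, by positivity, hk0 ▸ hc2 k0⟩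

lemma cone_card_le {F : Finset (Fin d)} (hF : Δ.isCone F) : F.card ≤ n := by
  obtain ⟨b, ι, hinj, -⟩ := Δ.unimodular hF
  calc F.card = (F.image ι).card := (Finset.card_image_of_injOn hinj).symm
  _ ≤ (Finset.univ : Finset (Fin n)).card := Finset.card_le_card (Finset.subset_univ _)
  _ = n := by rw [Finset.card_univ, Fintype.card_fin]

lemma realCone_subset_span (F : Finset (Fin d)) :
    realCone Δ.v F ⊆ (Submodule.span ℝ (vR Δ '' ↑F) : Set (Fin n → ℝ)) := by
  rintro x ⟨c, -, hcs, rfl⟩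
  apply Submodule.sum_mem
  intro j _
  by_cases hj : j ∈ F
  · exact Submodule.smul_mem _ _ (Submodule.subset_span ⟨j, hj, rfl⟩)
  · rw [hcs j hj, zero_smul]
    exact Submodule.zero_mem _

lemma exists_max_cone {F : Finset (Fin d)} (hF : Δ.isCone F) :
    ∃ G, Δ.isCone G ∧ F ⊆ G ∧ G.card = n := by
  have H : ∀ k : ℕ, ∀ F : Finset (Fin d), Δ.isCone F → n - F.card ≤ k →
      ∃ G, Δ.isCone G ∧ F ⊆ G ∧ G.card = n := by
    intro k
    induction k with
    | zero =>
      intro F hF h0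
      exact ⟨F, hF, subset_rfl, le_antisymm (cone_card_le hF) (by omega)⟩
    | succ k ih =>
      intro F hF hk
      by_cases hcard : F.card = n
      · exact ⟨F, hF, subset_rfl, hcard⟩
      · have hlt : F.card < n := lt_of_le_of_ne (cone_card_le hF) hcard
        have hspan : Submodule.span ℝ (vR Δ '' ↑F) ≠ ⊤ := by
          intro htop
          have h1 : Module.finrank ℝ (Submodule.span ℝ ((F.image (vR Δ) : Finset (Fin n → ℝ)) : Set (Fin n → ℝ))) ≤ (F.image (vR Δ)).card := by
            haveI : Fintype ((F.image (vR Δ) : Finset (Fin n → ℝ)) : Set (Fin n → ℝ)) :=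
              FinsetCoe.fintype _
            refine le_trans (finrank_span_le_card _) ?_
            simp
          rw [Finset.coe_image] at h1
          rw [htop] at h1
          have h2 : (F.image (vR Δ)).card ≤ F.card := Finset.card_image_le
          have h3 : Module.finrank ℝ (⊤ : Submodule ℝ (Fin n → ℝ)) = n := by
            rw [finrank_top, Module.finrank_fin_fun]
          omega
        obtain ⟨w, hw⟩ : ∃ w, w ∉ Submodule.span ℝ (vR Δ '' ↑F) := by
          by_contra h
          push_neg at h
          exact hspan (Submodule.eq_top_iff'.mpr h)
        obtain ⟨G, t, hG, hFG, ht, hmem⟩ := exists_cone_perturb hF w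
        have hne : F ≠ G := by
          rintro rfl
          have h1 := realCone_subset_span F hmem
          have h2 := realCone_subset_span (Δ := Δ) F (sum_mem_realCone F)
          have h3 : t • w ∈ Submodule.span ℝ (vR Δ '' ↑F) := by
            simpa using Submodule.sub_mem _ h1 h2
          exact hw (by simpa [ht.ne'] using Submodule.smul_mem _ t⁻¹ h3)
        have hssub : F ⊂ G := ssubset_of_subset_of_ne hFG hne
        have hkk : n - G.card ≤ k := by
          have := Finset.card_lt_card hssub
          omega
        obtain ⟨G', h1, h2, h3⟩ := ih G hG hkk
        exact ⟨G', h1, hFG.trans h2, h3⟩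
  exact H n F hF (by omega)

lemma exists_other_max {G : Finset (Fin d)} (hG : Δ.isCone G) (hGcard : G.card = n)
    {j : Fin d} (hj : j ∈ G) :
    ∃ G', Δ.isCone G' ∧ G'.card = n ∧ G.erase j ⊆ G' ∧ G' ≠ G := by
  have hF : Δ.isCone (G.erase j) := Δ.isCone_mono hG (Finset.erase_subset j G)
  obtain ⟨G0, t, hG0, hFG0, ht, hmem⟩ := exists_cone_perturb hF (-(vR Δ j))
  obtain ⟨G', hG', hG0G', hcard'⟩ := exists_max_cone hG0
  refine ⟨G', hG', hcard', hFG0.trans hG0G', ?_⟩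
  intro heq
  subst heq
  have hmem' : (∑ l ∈ G'.erase j, vR Δ l) + t • (-(vR Δ j)) ∈ realCone Δ.v G' :=
    realCone_mono hG0G' hmem
  obtain ⟨c, hcn, hcs, hce⟩ := hmem'
  obtain ⟨φ, hφ⟩ := exists_dual_real hG hj
  have hce' : (∑ l ∈ G'.erase j, vR Δ l) + t • (-(vR Δ j)) = ∑ l : Fin d, c l • vR Δ l := hce
  have h1 : φ (∑ l : Fin d, c l • vR Δ l) = c j := realCone_coeff hφ hj hcs
  have h2 : φ ((∑ l ∈ G'.erase j, vR Δ l) + t • (-(vR Δ j))) = -t := by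
    rw [map_add, map_smul, map_neg, hφ j hj, if_pos rfl]
    have h0 : φ (∑ l ∈ G'.erase j, vR Δ l) = 0 := by
      rw [map_sum]
      apply Finset.sum_eq_zero
      intro l hl
      rw [hφ l (Finset.mem_of_mem_erase hl), if_neg (Finset.ne_of_mem_erase hl)]
    rw [h0, smul_eq_mul]
    ring
  rw [hce', h1] at h2
  have := hcn j
  rw [h2] at this
  linarith

lemma tau_subset_of_min {m : ℕ} (o : MaxOrder Δ m) {γ : Finset (Fin d)} (k0 : Fin m)
    (hsub : γ ⊆ o.σ k0) (hminimal : ∀ k : Fin m, γ ⊆ o.σ k → k0 ≤ k) :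
    o.tau k0 ⊆ γ := by
  intro j hj
  rw [MaxOrder.tau, Finset.mem_filter] at hj
  obtain ⟨hjσ, hjall⟩ := hj
  by_contra hjγ
  have hγF : γ ⊆ (o.σ k0).erase j :=
    fun t ht => Finset.mem_erase.mpr ⟨fun h => hjγ (h ▸ ht), hsub ht⟩
  obtain ⟨G', hG', hG'card, hFG', hne⟩ := exists_other_max (o.isCone_σ k0) (o.card_σ k0) hjσ
  obtain ⟨k, hk⟩ := o.σ_surj G' hG' hG'card
  have hkne : k ≠ k0 := by
    intro h
    rw [h] at hk
    exact hne hk.symm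
  rcases lt_or_gt_of_ne hkne with hlt | hgt
  · refine absurd (hminimal k ?_) (not_le.mpr hlt)
    rw [hk]
    exact hγF.trans hFG'
  · have hjk : j ∈ o.σ k := by
      apply hjall k hgt
      have hsub1 : (o.σ k0).erase j ⊆ o.σ k0 ∩ o.σ k := by
        intro t ht
        refine Finset.mem_inter.mpr ⟨Finset.mem_of_mem_erase ht, ?_⟩
        rw [hk]
        exact hFG' ht
      have hjnot : j ∉ o.σ k0 ∩ o.σ k := by
        intro hmem
        have hsubk : o.σ k0 ⊆ o.σ k := by
          intro t ht
          by_cases h : t = j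
          · subst h
            exact (Finset.mem_inter.mp hmem).2
          · rw [hk]
            exact hFG' (Finset.mem_erase.mpr ⟨h, ht⟩)
        have heq : o.σ k0 = o.σ k :=
          Finset.eq_of_subset_of_card_le hsubk (by rw [o.card_σ, o.card_σ])
        exact hkne (o.σ_inj heq.symm)
      have hsub2 : o.σ k0 ∩ o.σ k ⊆ (o.σ k0).erase j := fun t ht =>
        Finset.mem_erase.mpr ⟨fun h => hjnot (h ▸ ht), (Finset.mem_inter.mp ht).1⟩
      rw [subset_antisymm hsub2 hsub1, Finset.card_erase_of_mem hjσ, o.card_σ]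
    have hsubG : o.σ k0 ⊆ G' := by
      intro t ht
      by_cases h : t = j
      · subst h
        rw [← hk] at *
        exact hjk
      · exact hFG' (Finset.mem_erase.mpr ⟨h, ht⟩)
    have : o.σ k0 = G' :=
      Finset.eq_of_subset_of_card_le hsubG (by rw [hG'card, o.card_σ])
    exact hne this.symm

end Geometry

/-! ### The span machinery -/

section Span

variable {S}
variable {m : ℕ} {Δ : Fan n d} (o : MaxOrder Δ m)
variable (uu : Fin n → ((Fin n → ℤ) →ₗ[ℤ] ℤ)) (ru : Fin n → Sˣ)
variable (hc : ∀ i k, Commute (ru i) (ru k))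

/-- membership in the left `S`-span of the monomials `x(τ i)` -/
def GoodSet (y : RcalRing S Δ uu ru hc) : Prop :=
  ∃ c : Fin m → S, y = ∑ i, mkRcal S Δ uu ru hc (Cc S (c i)) *
    mkRcal S Δ uu ru hc (mon S (o.tau i))

lemma pi_gen_zero {p : Poly S d} (hp : p ∈ gensII S Δ uu ru hc) :
    mkRcal S Δ uu ru hc p = 0 := by
  have h := RingQuot.mkRingHom_rel (r := relOf S (gensII S Δ uu ru hc)) ⟨hp, rfl⟩
  rw [map_zero] at h
  exact h

lemma pi_mon_zero {F : Finset (Fin d)} (hF : ¬ Δ.isCone F) :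
    mkRcal S Δ uu ru hc (mon S F) = 0 :=
  pi_gen_zero uu ru hc (Or.inl ⟨F, hF, rfl⟩)

lemma pi_single_zero {b : Fin d →₀ ℕ} (hb : ¬ Δ.isCone b.support) :
    mkRcal S Δ uu ru hc (AddMonoidAlgebra.single b 1) = 0 := by
  rw [single_eq_mon_mul (S := S) b, map_mul, pi_mon_zero uu ru hc hb, zero_mul]

lemma pi_zrel (a : Fin n → ℤ) :
    mkRcal S Δ uu ru hc (zPos S Δ (∑ i, a i • uu i)) =
      mkRcal S Δ uu ru hc (Cc S (rOf S ru hc a)) *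
      mkRcal S Δ uu ru hc (zNeg S Δ (∑ i, a i • uu i)) := by
  have h0 := pi_gen_zero (Δ := Δ) uu ru hc (Or.inr ⟨a, rfl⟩)
  rw [map_sub, map_mul, sub_eq_zero] at h0
  exact h0

lemma Good_zero : GoodSet o uu ru hc (0 : RcalRing S Δ uu ru hc) := by
  refine ⟨0, ?_⟩
  have h : Cc S (0 : S) = (0 : Poly S d) := AddMonoidAlgebra.single_zero 0
  simp [h]

lemma Good_add {y z : RcalRing S Δ uu ru hc} (hy : GoodSet o uu ru hc y)
    (hz : GoodSet o uu ru hc z) : GoodSet o uu ru hc (y + z) := by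
  obtain ⟨cy, hy⟩ := hy
  obtain ⟨cz, hz⟩ := hz
  refine ⟨cy + cz, ?_⟩
  rw [hy, hz, ← Finset.sum_add_distrib]
  refine Finset.sum_congr rfl fun i _ => ?_
  have h : Cc S ((cy + cz) i) = (Cc S (cy i) + Cc S (cz i) : Poly S d) := by
    simp only [Pi.add_apply, Cc]
    exact AddMonoidAlgebra.single_add 0 (cy i) (cz i)
  rw [h, map_add, add_mul]

lemma Good_neg {y : RcalRing S Δ uu ru hc} (hy : GoodSet o uu ru hc y) :
    GoodSet o uu ru hc (-y) := by
  obtain ⟨cy, hy⟩ := hy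
  refine ⟨-cy, ?_⟩
  rw [hy, ← Finset.sum_neg_distrib]
  refine Finset.sum_congr rfl fun i _ => ?_
  have h : Cc S ((-cy) i) = (-(Cc S (cy i)) : Poly S d) := by
    simp only [Pi.neg_apply, Cc]
    exact AddMonoidAlgebra.single_neg 0 (cy i)
  rw [h, map_neg]
  exact (neg_mul (mkRcal S Δ uu ru hc (Cc S (cy i))) (mkRcal S Δ uu ru hc (mon S (o.tau i)))).symm

lemma Good_sub {y z : RcalRing S Δ uu ru hc} (hy : GoodSet o uu ru hc y)
    (hz : GoodSet o uu ru hc z) : GoodSet o uu ru hc (y - z) := by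
  rw [sub_eq_add_neg]
  exact Good_add o uu ru hc hy (Good_neg o uu ru hc hz)

lemma Good_smul (s : S) {y : RcalRing S Δ uu ru hc} (hy : GoodSet o uu ru hc y) :
    GoodSet o uu ru hc (mkRcal S Δ uu ru hc (Cc S s) * y) := by
  obtain ⟨cy, hy⟩ := hy
  refine ⟨fun i => s * cy i, ?_⟩
  rw [hy, Finset.mul_sum]
  refine Finset.sum_congr rfl fun i _ => ?_
  rw [← mul_assoc, ← map_mul]
  congr 2
  rw [Cc, Cc, Cc, AddMonoidAlgebra.single_mul_single, zero_add]

lemma Good_sum {ι : Type*} (s : Finset ι) (f : ι → RcalRing S Δ uu ru hc)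
    (hf : ∀ i ∈ s, GoodSet o uu ru hc (f i)) :
    GoodSet o uu ru hc (∑ i ∈ s, f i) := by
  classical
  induction s using Finset.induction with
  | empty => simpa using Good_zero o uu ru hc
  | @insert a s hna ih =>
    rw [Finset.sum_insert hna]
    exact Good_add o uu ru hc (hf a (Finset.mem_insert_self a s))
      (ih (fun i hi => hf i (Finset.mem_insert_of_mem hi)))

lemma Good_mon_tau (i0 : Fin m) :
    GoodSet o uu ru hc (mkRcal S Δ uu ru hc (mon S (o.tau i0))) := by
  refine ⟨fun k => if k = i0 then 1 else 0, ?_⟩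
  rw [Finset.sum_eq_single i0]
  · dsimp only
    rw [if_pos rfl]
    have h : Cc S (1 : S) = (1 : Poly S d) := rfl
    rw [h, map_one, one_mul]
  · intro k _ hk
    dsimp only
    rw [if_neg hk]
    have h : Cc S (0 : S) = (0 : Poly S d) := AddMonoidAlgebra.single_zero 0
    rw [h, map_zero, zero_mul]
  · exact fun h => absurd (Finset.mem_univ i0) h

lemma Good_of_support (q : Poly S d)
    (H : ∀ b ∈ q.coeff.support, GoodSet o uu ru hc
      (mkRcal S Δ uu ru hc (AddMonoidAlgebra.single b 1))) :
    GoodSet o uu ru hc (mkRcal S Δ uu ru hc q) := by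
  rw [poly_eq_sum_support q, map_sum]
  refine Good_sum o uu ru hc _ _ fun b hb => ?_
  rw [map_mul]
  exact Good_smul o uu ru hc _ (H b hb)

lemma uu_span (hnd : n ≤ d)
    (huu : ∀ i j : Fin n, uu i (Δ.v (Fin.castLE hnd j)) = if i = j then 1 else 0)
    (hfirstn : Δ.isCone (firstn hnd)) (u : (Fin n → ℤ) →ₗ[ℤ] ℤ) :
    ∑ k, (u (Δ.v (Fin.castLE hnd k))) • uu k = u := by
  obtain ⟨b, ι, hinj, hb⟩ := Δ.unimodular hfirstn
  have hmem : ∀ k : Fin n, Fin.castLE hnd k ∈ firstn hnd := fun k => by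
    rw [firstn, Finset.mem_map]
    exact ⟨k, Finset.mem_univ k, rfl⟩
  have hιinj : Function.Injective (fun k : Fin n => ι (Fin.castLE hnd k)) := by
    intro k k' h
    exact Fin.castLE_injective hnd (hinj (hmem k) (hmem k') h)
  have hbij := Finite.injective_iff_bijective.mp hιinj
  let e : Fin n ≃ Fin n := Equiv.ofBijective _ hbij
  let b' : Module.Basis (Fin n) ℤ (Fin n → ℤ) := b.reindex e.symm
  have hb' : ∀ k : Fin n, b' k = Δ.v (Fin.castLE hnd k) := by
    intro k
    rw [Module.Basis.reindex_apply, Equiv.symm_symm]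
    exact hb _ (hmem k)
  refine Module.Basis.ext b' (fun k' => ?_)
  rw [hb' k', LinearMap.sum_apply]
  simp only [LinearMap.smul_apply, smul_eq_mul, huu, mul_ite, mul_one, mul_zero]
  rw [Finset.sum_ite_eq' Finset.univ k' (fun k => u (Δ.v (Fin.castLE hnd k)))]
  rw [if_pos (Finset.mem_univ k')]

lemma key_step (hnd : n ≤ d)
    (huu : ∀ i j : Fin n, uu i (Δ.v (Fin.castLE hnd j)) = if i = j then 1 else 0)
    (hfirstn : Δ.isCone (firstn hnd))
    (a : Fin d →₀ ℕ) (k0 : Fin m) (hsub0 : a.support ⊆ o.σ k0)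
    (jj : Fin d) (hjja : jj ∈ a.support)
    (hτa : o.tau k0 ⊆ a.support)
    (hτa' : o.tau k0 ⊆ (a - Finsupp.single jj 1).support)
    (hGa' : GoodSet o uu ru hc
      (mkRcal S Δ uu ru hc (AddMonoidAlgebra.single (a - Finsupp.single jj 1) 1)))
    (hhigher : ∀ b : Fin d →₀ ℕ, Δ.isCone b.support →
      (∃ l, l ∉ o.σ k0 ∧ l ∈ b.support) → o.tau k0 ⊆ b.support →
      GoodSet o uu ru hc (mkRcal S Δ uu ru hc (AddMonoidAlgebra.single b 1))) :
    GoodSet o uu ru hc (mkRcal S Δ uu ru hc (AddMonoidAlgebra.single a 1)) := by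
  classical
  set π := mkRcal S Δ uu ru hc with hπdef
  set a' := a - Finsupp.single jj 1 with ha'def
  obtain ⟨b, ι, hinj, hb⟩ := Δ.unimodular (o.isCone_σ k0)
  set u : (Fin n → ℤ) →ₗ[ℤ] ℤ := b.coord (ι jj) with hu
  have hjσ : jj ∈ o.σ k0 := hsub0 hjja
  have hdual : ∀ l ∈ o.σ k0, u (Δ.v l) = if l = jj then 1 else 0 := by
    intro l hl
    rw [hu, ← hb l hl, Module.Basis.coord_apply, Module.Basis.repr_self, Finsupp.single_apply]
    by_cases h : l = jj
    · subst h; simp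
    · rw [if_neg (fun hh => h (hinj hl hjσ hh)), if_neg h]
  have husum : (∑ k : Fin n, (u (Δ.v (Fin.castLE hnd k))) • uu k) = u :=
    uu_span uu hnd huu hfirstn u
  set r : S := rOf S ru hc (fun k => u (Δ.v (Fin.castLE hnd k))) with hrdef
  have hrel : π (zPos S Δ u) = π (Cc S r) * π (zNeg S Δ u) := by
    have h := pi_zrel (Δ := Δ) uu ru hc (fun k => u (Δ.v (Fin.castLE hnd k)))
    rw [husum] at h
    exact h
  have hcomm : ∀ l k : Fin d,
      Commute ((1 - X S l) ^ (u (Δ.v l)).toNat) ((1 - X S k) ^ (u (Δ.v k)).toNat) :=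
    fun l k => commute_one_sub_X_pow S l k _ _
  have hz1 : zPos S Δ u = (1 - X S jj) ^ (u (Δ.v jj)).toNat *
      (Finset.univ.erase jj).noncommProd (fun l => (1 - X S l) ^ (u (Δ.v l)).toNat)
        (fun x _ y _ _ => hcomm x y) := noncommProd_univ_erase _ hcomm jj
  have hpowjj : (1 - X S jj) ^ (u (Δ.v jj)).toNat = 1 - X S jj := by
    rw [hdual jj hjσ, if_pos rfl]
    norm_num
  choose gP hgP hgP0 using fun l : Fin d => one_sub_X_pow_decomp (S := S) l ((u (Δ.v l)).toNat)
  have hcomm' : ∀ l k : Fin d, Commute (1 + X S l * gP l) (1 + X S k * gP k) := by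
    intro l k
    rw [← hgP l, ← hgP k]
    exact hcomm l k
  obtain ⟨hP, hPdec, hPzero⟩ :=
    noncommProd_one_add_decomp gP hcomm' (Finset.univ.erase jj)
  have hPP : (Finset.univ.erase jj).noncommProd (fun l => (1 - X S l) ^ (u (Δ.v l)).toNat)
      (fun x _ y _ _ => hcomm x y) =
      1 + ∑ l ∈ Finset.univ.erase jj, X S l * hP l :=
    (Finset.noncommProd_congr rfl (fun x _ => hgP x) _).trans hPdec
  choose gQ hgQ hgQ0 using fun l : Fin d =>
    one_sub_X_pow_decomp (S := S) l ((-(u (Δ.v l))).toNat)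
  have hcommQ' : ∀ l k : Fin d, Commute (1 + X S l * gQ l) (1 + X S k * gQ k) := by
    intro l k
    rw [← hgQ l, ← hgQ k]
    exact commute_one_sub_X_pow S l k _ _
  obtain ⟨hQ, hQdec, hQzero⟩ := noncommProd_one_add_decomp gQ hcommQ' Finset.univ
  have hQQ : zNeg S Δ u = 1 + ∑ l, X S l * hQ l :=
    (Finset.noncommProd_congr rfl (fun x _ => hgQ x) _).trans hQdec
  -- the monomial identity
  have hXa : (X S jj) * AddMonoidAlgebra.single a' (1:S) = AddMonoidAlgebra.single a 1 := by
    rw [X, AddMonoidAlgebra.single_mul_single, one_mul]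
    congr 1
    ext t
    rw [Finsupp.add_apply, Finsupp.tsub_apply, Finsupp.single_apply]
    by_cases h : jj = t
    · subst h
      have h1 : a jj ≠ 0 := Finsupp.mem_support_iff.mp hjja
      rw [if_pos rfl]
      omega
    · rw [if_neg h]
      omega
  set T : Poly S d := ∑ l ∈ Finset.univ.erase jj, X S l * hP l with hTdef
  set TQ : Poly S d := ∑ l : Fin d, X S l * hQ l with hTQdef
  set A' : Poly S d := AddMonoidAlgebra.single a' 1 with hA'def
  set Aa : Poly S d := AddMonoidAlgebra.single a (1:S) with hAadef
  have hXc : ∀ q : Poly S d, Commute (X S jj) q := fun q =>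
    show Commute (AddMonoidAlgebra.single (Finsupp.single jj 1) (1:S)) q from
      single_central _ q
  have hpoly : ((1 : Poly S d) - X S jj) * ((1 + T) * A') =
      (1 + T) * A' - (T * Aa + Aa) := by
    have e1 : X S jj * ((1 + T) * A') = Aa + T * Aa := by
      rw [add_mul, one_mul, mul_add, hXa, ← mul_assoc, (hXc T).eq, mul_assoc, hXa]
    rw [sub_mul, one_mul, e1]
    abel
  -- the main equation
  have h1 : π ((1 + T) * A') - (π (T * Aa) + π Aa) = π (Cc S r) * π ((1 + TQ) * A') := by
    have h0 : π (zPos S Δ u * A') = π (Cc S r) * π (zNeg S Δ u * A') := by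
      rw [map_mul, map_mul, hrel, mul_assoc]
    rw [hz1, hpowjj, hPP] at h0
    rw [hQQ] at h0
    rw [mul_assoc, hpoly] at h0
    rw [map_sub, map_add] at h0
    exact h0
  have hmain : π Aa = π ((1 + T) * A') - π (T * Aa) - π (Cc S r) * π ((1 + TQ) * A') := by
    rw [← h1]
    abel
  -- goodness of the generic terms
  have term_good : ∀ l : Fin d, l ∉ o.σ k0 → ∀ (w : Poly S d) (cm : Fin d →₀ ℕ),
      o.tau k0 ⊆ cm.support → GoodSet o uu ru hc (π (X S l * w * AddMonoidAlgebra.single cm 1)) := by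
    intro l hl w cm hτc
    apply Good_of_support
    intro bb hbb
    have hsub1 := AddMonoidAlgebra.support_coeff_mul_subset (k := S) (X S l * w) (AddMonoidAlgebra.single cm 1)
    have hsub2 := AddMonoidAlgebra.support_coeff_mul_subset (k := S) (X S l) w
    obtain ⟨p, hp, q, hq, hpq⟩ := Finset.mem_add.mp (hsub1 hbb)
    obtain ⟨x, hx, y, hy, hxy⟩ := Finset.mem_add.mp (hsub2 hp)
    have hxval : x = Finsupp.single l 1 :=
      Finset.mem_singleton.mp (Finsupp.support_single_subset hx)
    have hqval : q = cm := Finset.mem_singleton.mp (Finsupp.support_single_subset hq)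
    have hbbval : bb = Finsupp.single l 1 + y + cm := by rw [← hpq, ← hxy, hxval, hqval]
    have hlbb : l ∈ bb.support := by
      rw [Finsupp.mem_support_iff, hbbval]
      simp only [Finsupp.add_apply, Finsupp.single_eq_same]
      omega
    have hcmbb : cm.support ⊆ bb.support := by
      intro t ht
      rw [Finsupp.mem_support_iff] at ht ⊢
      rw [hbbval]
      simp only [Finsupp.add_apply]
      omega
    by_cases hbcone : Δ.isCone bb.support
    · exact hhigher bb hbcone ⟨l, hl, hlbb⟩ (hτc.trans hcmbb)
    · have hz := pi_single_zero (Δ := Δ) uu ru hc hbcone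
      rw [show mkRcal S Δ uu ru hc (AddMonoidAlgebra.single bb 1) = π (AddMonoidAlgebra.single bb 1) from rfl] at hz
      rw [hz]
      exact Good_zero o uu ru hc
  -- part 1 : (1 + T) * A'
  have good1 : GoodSet o uu ru hc (π ((1 + T) * A')) := by
    have hTmul : (1 + T) * A' = A' + ∑ l ∈ Finset.univ.erase jj, X S l * hP l * A' := by
      rw [add_mul, one_mul, hTdef, Finset.sum_mul]
    rw [hTmul, map_add, map_sum]
    refine Good_add o uu ru hc hGa' (Good_sum o uu ru hc _ _ fun l hlmem => ?_)
    by_cases hze : (u (Δ.v l)).toNat = 0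
    · rw [hPzero l (hgP0 l hze), mul_zero, zero_mul, map_zero]
      exact Good_zero o uu ru hc
    · have hlnot : l ∉ o.σ k0 := by
        intro hlσ
        have hne : l ≠ jj := (Finset.mem_erase.mp hlmem).1
        have h := hdual l hlσ
        rw [if_neg hne] at h
        rw [h] at hze
        simp at hze
      exact term_good l hlnot (hP l) a' hτa'
  -- part 3 : T * Aa
  have good3 : GoodSet o uu ru hc (π (T * Aa)) := by
    rw [hTdef, Finset.sum_mul, map_sum]
    refine Good_sum o uu ru hc _ _ fun l hlmem => ?_
    by_cases hze : (u (Δ.v l)).toNat = 0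
    · rw [hPzero l (hgP0 l hze), mul_zero, zero_mul, map_zero]
      exact Good_zero o uu ru hc
    · have hlnot : l ∉ o.σ k0 := by
        intro hlσ
        have hne : l ≠ jj := (Finset.mem_erase.mp hlmem).1
        have h := hdual l hlσ
        rw [if_neg hne] at h
        rw [h] at hze
        simp at hze
      exact term_good l hlnot (hP l) a hτa
  -- part 2 : (1 + TQ) * A'
  have good2 : GoodSet o uu ru hc (π ((1 + TQ) * A')) := by
    have hTQmul : (1 + TQ) * A' = A' + ∑ l : Fin d, X S l * hQ l * A' := by
      rw [add_mul, one_mul, hTQdef, Finset.sum_mul]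
    rw [hTQmul, map_add, map_sum]
    refine Good_add o uu ru hc hGa' (Good_sum o uu ru hc _ _ fun l _ => ?_)
    by_cases hze : (-(u (Δ.v l))).toNat = 0
    · rw [hQzero l (hgQ0 l hze), mul_zero, zero_mul, map_zero]
      exact Good_zero o uu ru hc
    · have hlnot : l ∉ o.σ k0 := by
        intro hlσ
        have h := hdual l hlσ
        by_cases hlj : l = jj
        · rw [if_pos hlj] at h
          rw [h] at hze
          simp at hze
        · rw [if_neg hlj] at h
          rw [h] at hze
          simp at hze
      exact term_good l hlnot (hQ l) a' hτa'
  rw [hmain]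
  exact Good_sub o uu ru hc (Good_sub o uu ru hc good1 good3) (Good_smul o uu ru hc r good2)

lemma main_claim (hstar : o.Star) (hnd : n ≤ d)
    (huu : ∀ i j : Fin n, uu i (Δ.v (Fin.castLE hnd j)) = if i = j then 1 else 0)
    (hfirstn : Δ.isCone (firstn hnd)) :
    ∀ a : Fin d →₀ ℕ, Δ.isCone a.support →
      GoodSet o uu ru hc (mkRcal S Δ uu ru hc (AddMonoidAlgebra.single a 1)) := by
  classical
  have hdegcard : ∀ aa : Fin d →₀ ℕ, aa.support.card ≤ ∑ t, aa t := by
    intro aa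
    calc aa.support.card = ∑ _t ∈ aa.support, 1 := by rw [Finset.card_eq_sum_ones]
    _ ≤ ∑ t ∈ aa.support, aa t :=
        Finset.sum_le_sum (fun t ht => Nat.one_le_iff_ne_zero.mpr (Finsupp.mem_support_iff.mp ht))
    _ ≤ ∑ t, aa t := Finset.sum_le_sum_of_subset (Finset.subset_univ _)
  have claim : ∀ j : ℕ, ∀ a : Fin d →₀ ℕ, Δ.isCone a.support →
      (∀ k : Fin m, a.support ⊆ o.σ k → m - j ≤ (k : ℕ)) →
      GoodSet o uu ru hc (mkRcal S Δ uu ru hc (AddMonoidAlgebra.single a 1)) := by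
    intro j
    induction j with
    | zero =>
      intro a hcone hmin
      exfalso
      obtain ⟨G, hG, hsubG, hcardG⟩ := exists_max_cone hcone
      obtain ⟨k, hk⟩ := o.σ_surj G hG hcardG
      have h1 := hmin k (by rw [hk]; exact hsubG)
      have h2 := k.isLt
      omega
    | succ j ihj =>
      have inner : ∀ N : ℕ, ∀ a : Fin d →₀ ℕ,
          (d+1) * ((∑ t, a t) - a.support.card) + a.support.card ≤ N →
          Δ.isCone a.support →
          (∀ k : Fin m, a.support ⊆ o.σ k → m - (j+1) ≤ (k : ℕ)) →
          GoodSet o uu ru hc (mkRcal S Δ uu ru hc (AddMonoidAlgebra.single a 1)) := by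
        intro N
        induction N using Nat.strong_induction_on with
        | _ N IH =>
        intro a hν hcone hmin
        obtain ⟨G, hG, hsubG, hcardG⟩ := exists_max_cone hcone
        obtain ⟨kG, hkG⟩ := o.σ_surj G hG hcardG
        obtain ⟨k0, hk0mem, hk0min⟩ := Finset.exists_min_image
          (Finset.univ.filter (fun k : Fin m => a.support ⊆ o.σ k)) id
          ⟨kG, Finset.mem_filter.mpr ⟨Finset.mem_univ kG, by rw [hkG]; exact hsubG⟩⟩
        have hsub0 : a.support ⊆ o.σ k0 := (Finset.mem_filter.mp hk0mem).2
        have hk0min' : ∀ k : Fin m, a.support ⊆ o.σ k → k0 ≤ k := fun k hk =>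
          hk0min k (Finset.mem_filter.mpr ⟨Finset.mem_univ k, hk⟩)
        have hik0 : m - (j+1) ≤ (k0 : ℕ) := hmin k0 hsub0
        by_cases hcase : m - (j+1) < (k0 : ℕ)
        · refine ihj a hcone (fun k hk => ?_)
          have hle : (k0 : ℕ) ≤ (k : ℕ) := hk0min' k hk
          omega
        · have hi : (k0 : ℕ) = m - (j+1) := by omega
          have hτ : o.tau k0 ⊆ a.support := tau_subset_of_min o k0 hsub0 hk0min'
          have hhigher : ∀ bb : Fin d →₀ ℕ, Δ.isCone bb.support →
              (∃ l, l ∉ o.σ k0 ∧ l ∈ bb.support) → o.tau k0 ⊆ bb.support →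
              GoodSet o uu ru hc (mkRcal S Δ uu ru hc (AddMonoidAlgebra.single bb 1)) := by
            rintro bb hbbcone ⟨l, hl1, hl2⟩ hτbb
            refine ihj bb hbbcone (fun k hk => ?_)
            have h1 : k0 ≤ k := hstar k0 k (hτbb.trans hk)
            have h2 : k0 ≠ k := fun h => hl1 (h ▸ hk hl2)
            have h3 : (k0 : ℕ) < (k : ℕ) :=
              lt_of_le_of_ne h1 (fun hh => h2 (Fin.ext hh))
            omega
          by_cases hsq : ∀ t : Fin d, a t ≤ 1
          · by_cases hτall : a.support = o.tau k0
            · -- base case : a is the indicator of τ k0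
              have ha_eq : AddMonoidAlgebra.single a (1:S) = mon S (o.tau k0) := by
                rw [mon]
                congr 1
                rw [← hτall]
                ext t
                rw [indic_apply]
                by_cases h : t ∈ a.support
                · have h1 := Finsupp.mem_support_iff.mp h
                  have h2 := hsq t
                  rw [if_pos h]
                  omega
                · rw [if_neg h]
                  exact Finsupp.notMem_support_iff.mp h
              rw [ha_eq]
              exact Good_mon_tau o uu ru hc k0
            · -- case B : a squarefree, pick jj ∈ supp \ τ
              have hex : ∃ jj, jj ∈ a.support ∧ jj ∉ o.tau k0 := by
                by_contra h
                push_neg at h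
                exact hτall (subset_antisymm h hτ)
              obtain ⟨jj, hjja, hjjτ⟩ := hex
              have hajne : a jj ≠ 0 := Finsupp.mem_support_iff.mp hjja
              have haj : a jj = 1 := by
                have := hsq jj
                omega
              have hdeg : ∑ t, a t = (∑ t, (a - Finsupp.single jj 1 : Fin d →₀ ℕ) t) + 1 := by
                have hp : ∀ t : Fin d,
                    a t = (a - Finsupp.single jj 1 : Fin d →₀ ℕ) t + (if t = jj then 1 else 0) := by
                  intro t
                  rw [Finsupp.tsub_apply]
                  by_cases h : t = jj
                  · rw [h, Finsupp.single_eq_same, if_pos rfl]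
                    omega
                  · rw [Finsupp.single_eq_of_ne' (fun hh => h hh.symm), if_neg h]
                    omega
                rw [Finset.sum_congr rfl (fun t _ => hp t), Finset.sum_add_distrib,
                  Finset.sum_ite_eq' Finset.univ jj (fun _ => 1),
                  if_pos (Finset.mem_univ jj)]
              have hsupp' : (a - Finsupp.single jj 1).support = a.support.erase jj := by
                ext t
                rw [Finsupp.mem_support_iff, Finsupp.tsub_apply,
                  Finset.mem_erase, Finsupp.mem_support_iff]
                by_cases h : t = jj
                · rw [h, Finsupp.single_eq_same]
                  simp [haj]
                · rw [Finsupp.single_eq_of_ne' (fun hh => h hh.symm)]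
                  simp [h]
              have hτa' : o.tau k0 ⊆ (a - Finsupp.single jj 1).support := by
                rw [hsupp']
                intro t ht
                exact Finset.mem_erase.mpr ⟨fun h => hjjτ (h ▸ ht), hτ ht⟩
              have hdegeq : ∑ t, a t = a.support.card := by
                rw [← Finset.sum_subset (Finset.subset_univ a.support)
                  (fun t _ ht => Finsupp.notMem_support_iff.mp ht)]
                rw [Finset.card_eq_sum_ones]
                refine Finset.sum_congr rfl fun t ht => ?_
                have h1 := Finsupp.mem_support_iff.mp ht
                have h2 := hsq t
                omega
              have hcard' : (a - Finsupp.single jj 1).support.card = a.support.card - 1 := by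
                rw [hsupp', Finset.card_erase_of_mem hjja]
              have hcardpos : 1 ≤ a.support.card := Finset.card_pos.mpr ⟨jj, hjja⟩
              have hν' : (d+1) * ((∑ t, (a - Finsupp.single jj 1 : Fin d →₀ ℕ) t) -
                  (a - Finsupp.single jj 1).support.card) +
                  (a - Finsupp.single jj 1).support.card < N := by
                have hE0 : (∑ t, (a - Finsupp.single jj 1 : Fin d →₀ ℕ) t) -
                    (a - Finsupp.single jj 1).support.card = 0 := by omega
                have hE1 : (∑ t, a t) - a.support.card = 0 := by omega
                rw [hE0, Nat.mul_zero, Nat.zero_add]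
                rw [hE1, Nat.mul_zero, Nat.zero_add] at hν
                omega
              have hcone' : Δ.isCone (a - Finsupp.single jj 1).support := by
                rw [hsupp']
                exact Δ.isCone_mono hcone (Finset.erase_subset jj a.support)
              have hmin' : ∀ k : Fin m, (a - Finsupp.single jj 1).support ⊆ o.σ k →
                  m - (j+1) ≤ (k : ℕ) := by
                intro k hk
                have h1 : k0 ≤ k := hstar k0 k (hτa'.trans hk)
                have h2 : (k0 : ℕ) ≤ (k : ℕ) := h1
                omega
              have hGa' := IH _ hν' (a - Finsupp.single jj 1) (le_refl _) hcone' hmin'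
              exact key_step o uu ru hc hnd huu hfirstn a k0 hsub0 jj hjja hτ hτa' hGa' hhigher
          · -- case A : some exponent is ≥ 2
            push_neg at hsq
            obtain ⟨jj, hjj2⟩ := hsq
            have hajne : a jj ≠ 0 := by omega
            have hjja : jj ∈ a.support := Finsupp.mem_support_iff.mpr hajne
            have hdeg : ∑ t, a t = (∑ t, (a - Finsupp.single jj 1 : Fin d →₀ ℕ) t) + 1 := by
              have hp : ∀ t : Fin d,
                  a t = (a - Finsupp.single jj 1 : Fin d →₀ ℕ) t + (if t = jj then 1 else 0) := by
                intro t
                rw [Finsupp.tsub_apply]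
                by_cases h : t = jj
                · rw [h, Finsupp.single_eq_same, if_pos rfl]
                  omega
                · rw [Finsupp.single_eq_of_ne' (fun hh => h hh.symm), if_neg h]
                  omega
              rw [Finset.sum_congr rfl (fun t _ => hp t), Finset.sum_add_distrib,
                Finset.sum_ite_eq' Finset.univ jj (fun _ => 1),
                if_pos (Finset.mem_univ jj)]
            have hsupp' : (a - Finsupp.single jj 1).support = a.support := by
              ext t
              rw [Finsupp.mem_support_iff, Finsupp.tsub_apply,
                Finsupp.mem_support_iff]
              by_cases h : t = jj
              · rw [h, Finsupp.single_eq_same]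
                omega
              · rw [Finsupp.single_eq_of_ne' (fun hh => h hh.symm)]
                omega
            have hτa' : o.tau k0 ⊆ (a - Finsupp.single jj 1).support := by
              rw [hsupp']
              exact hτ
            have hstrict : a.support.card + 1 ≤ ∑ t, a t := by
              have h1 : (∑ _t ∈ a.support, 1) < ∑ t ∈ a.support, a t := by
                refine Finset.sum_lt_sum
                  (fun t ht => Nat.one_le_iff_ne_zero.mpr (Finsupp.mem_support_iff.mp ht))
                  ⟨jj, hjja, by omega⟩
              have h2 : ∑ t ∈ a.support, a t ≤ ∑ t, a t :=
                Finset.sum_le_sum_of_subset (Finset.subset_univ _)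
              rw [← Finset.card_eq_sum_ones] at h1
              omega
            have hν' : (d+1) * ((∑ t, (a - Finsupp.single jj 1 : Fin d →₀ ℕ) t) -
                (a - Finsupp.single jj 1).support.card) +
                (a - Finsupp.single jj 1).support.card < N := by
              rw [hsupp']
              have hE : (∑ t, a t) - a.support.card =
                  ((∑ t, (a - Finsupp.single jj 1 : Fin d →₀ ℕ) t) - a.support.card) + 1 := by omega
              calc (d+1) * ((∑ t, (a - Finsupp.single jj 1 : Fin d →₀ ℕ) t) - a.support.card) +
                  a.support.card
                  < (d+1) * ((∑ t, (a - Finsupp.single jj 1 : Fin d →₀ ℕ) t) - a.support.card) + (d+1) +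
                    a.support.card := by omega
              _ = (d+1) * ((∑ t, a t) - a.support.card) + a.support.card := by
                  rw [hE]; ring
              _ ≤ N := hν
            have hcone' : Δ.isCone (a - Finsupp.single jj 1).support := by
              rw [hsupp']
              exact hcone
            have hmin' : ∀ k : Fin m, (a - Finsupp.single jj 1).support ⊆ o.σ k →
                m - (j+1) ≤ (k : ℕ) := by
              intro k hk
              rw [hsupp'] at hk
              exact hmin k hk
            have hGa' := IH _ hν' (a - Finsupp.single jj 1) (le_refl _) hcone' hmin'
            exact key_step o uu ru hc hnd huu hfirstn a k0 hsub0 jj hjja hτ hτa' hGa' hhigher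
      intro a hcone hmin
      exact inner _ a (le_refl _) hcone hmin
  intro a hcone
  exact claim m a hcone (fun k _ => by omega)

end Span

theorem statement7 {n d m : ℕ} (hn : 1 ≤ n) (hnd : n ≤ d) (hm : 1 ≤ m)
    (Δ : Fan n d) (o : MaxOrder Δ m) (hstar : o.Star)
    (hlast : o.σ ⟨m - 1, by omega⟩ = firstn hnd)
    (S : Type*) [Ring S] (ru : Fin n → Sˣ)
    (hcen : ∀ i, (ru i : S) ∈ Subring.center S)
    (uu : Fin n → ((Fin n → ℤ) →ₗ[ℤ] ℤ))
    (huu : ∀ i j : Fin n, uu i (Δ.v (Fin.castLE hnd j)) = if i = j then 1 else 0) :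
    ∀ y : RcalRing S Δ uu ru (central_commute S ru hcen), ∃ c : Fin m → S,
      y = ∑ i, mkRcal S Δ uu ru (central_commute S ru hcen) (Cc S (c i)) *
        mkRcal S Δ uu ru (central_commute S ru hcen) (mon S (o.tau i)) := by
  intro y
  have hτfirst : Δ.isCone (firstn hnd) := by
    have h := o.isCone_σ ⟨m - 1, by omega⟩
    rwa [hlast] at h
  obtain ⟨q, hq⟩ := RingQuot.mkRingHom_surjective
    (relOf S (gensII S Δ uu ru (central_commute S ru hcen))) y
  have hGood : GoodSet o uu ru (central_commute S ru hcen) y := by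
    rw [← hq]
    have heq : RingQuot.mkRingHom (relOf S (gensII S Δ uu ru (central_commute S ru hcen))) q
        = mkRcal S Δ uu ru (central_commute S ru hcen) q := rfl
    rw [heq]
    refine Good_of_support o uu ru _ q (fun b hb => ?_)
    by_cases hcone : Δ.isCone b.support
    · exact main_claim o uu ru _ hstar hnd huu hτfirst b hcone
    · rw [pi_single_zero uu ru _ hcone]
      exact Good_zero o uu ru _
  exact hGood

end SU
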